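/- arXiv:cs/0310022 — 3 statements merged into one kernel-verified Lean document; each statement's English description precedes it below -/
import Mathlib

section
/- Let A and B be positive random variables with P[A ≥ x] ≤ α/x for all x > 0 and P[B ≥ x | A] ≤ β/x for all x > 0, where α, β > 0. Then P[AB ≥ x] ≤ (αβ/x)(1 + max(0, ln(x/(αβ)))). -/
open MeasureTheory Real Set Function Filter Topology

/-! Conditionally on `A`, the event `{x ≤ A * B}` has probability at most `min 1 (β * A / x)`, so
`P[AB ≥ x] ≤ E[min 1 (β * A / x)]`. The bound on `B` is only available on events of `σ(A)`, so this
is proved on the shells `{r ^ k ≤ A < r ^ (k + 1)}`, at the cost of a factor `r` which then tends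
to `1`. The variable `Z = min 1 (β * A / x)` takes values in `[0, 1]` and has tail
`P[Z ≥ t] ≤ c / t` with `c = α * β / x`, so by the layer-cake formula
`E[Z] ≤ ∫₀¹ min 1 (c / t) dt = c * (1 + log⁺ (1 / c))`. -/

theorem intervalIntegral_le_of_le_one_of_le_div {g : ℝ → ℝ} {c : ℝ} (hc : 0 < c)
    (hg : IntervalIntegrable g volume 0 1) (hg1 : ∀ t > 0, g t ≤ 1)
    (hgc : ∀ t > 0, g t ≤ c / t) :
    ∫ t in 0..1, g t ≤ c * (1 + max 0 (log (1 / c))) := by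
  rcases le_or_gt 1 c with hc1 | hc1
  · calc ∫ t in 0..1, g t ≤ ∫ _ in (0 : ℝ)..1, (1 : ℝ) :=
          intervalIntegral.integral_mono_on_of_le_Ioo zero_le_one hg intervalIntegrable_const
            fun t ht => hg1 t ht.1
      _ = 1 := by simp
      _ ≤ c * (1 + max 0 (log (1 / c))) := by nlinarith [le_max_left 0 (log (1 / c))]
  · have hsub : ∀ a b, a ∈ Icc (0 : ℝ) 1 → b ∈ Icc (0 : ℝ) 1 → IntervalIntegrable g volume a b :=
      fun a b ha hb => hg.mono_set (uIcc_subset_uIcc (by simpa using ha) (by simpa using hb))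
    have hcI : c ∈ Icc (0 : ℝ) 1 := ⟨hc.le, hc1.le⟩
    have hleft : ∫ t in 0..c, g t ≤ c :=
      calc ∫ t in 0..c, g t ≤ ∫ _ in (0 : ℝ)..c, (1 : ℝ) :=
            intervalIntegral.integral_mono_on_of_le_Ioo hc.le (hsub 0 c (by simp) hcI)
              intervalIntegrable_const fun t ht => hg1 t ht.1
        _ = c := by simp
    have h0 : (0 : ℝ) ∉ uIcc c 1 := by
      rw [uIcc_of_le hc1.le]
      exact fun h => hc.not_ge h.1
    have hright : ∫ t in c..1, g t ≤ c * log (1 / c) :=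
      calc ∫ t in c..1, g t ≤ ∫ t in c..1, c * t⁻¹ :=
            intervalIntegral.integral_mono_on_of_le_Ioo hc1.le (hsub c 1 hcI (by simp))
              ((intervalIntegrable_inv_iff.2 (Or.inr h0)).const_mul c)
              fun t ht => by simpa [div_eq_mul_inv] using hgc t (hc.trans ht.1)
        _ = c * log (1 / c) := by
            rw [intervalIntegral.integral_const_mul, integral_inv h0]
    rw [max_eq_right (log_nonneg (one_le_one_div hc hc1.le)),
      ← intervalIntegral.integral_add_adjacent_intervals (hsub 0 c (by simp) hcI)
        (hsub c 1 hcI (by simp))]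
    linarith

theorem integral_le_of_measureReal_le_div {Ω : Type*} [MeasurableSpace Ω] {P : Measure Ω}
    [IsProbabilityMeasure P] {Z : Ω → ℝ} (hZ : AEStronglyMeasurable Z P)
    (hZ0 : ∀ᵐ ω ∂P, 0 ≤ Z ω) (hZ1 : ∀ᵐ ω ∂P, Z ω ≤ 1) {c : ℝ} (hc : 0 < c)
    (htail : ∀ t > 0, P.real {ω | t ≤ Z ω} ≤ c / t) :
    ∫ ω, Z ω ∂P ≤ c * (1 + max 0 (log (1 / c))) := by
  have hint : Integrable Z P := .of_bound hZ 1 <| by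
    filter_upwards [hZ0, hZ1] with ω h0 h1
    rwa [norm_of_nonneg h0]
  rw [hint.integral_eq_integral_Ioc_meas_le (M := 1) hZ0 hZ1,
    ← intervalIntegral.integral_of_le zero_le_one]
  refine intervalIntegral_le_of_le_one_of_le_div hc ?_ (fun t _ => measureReal_le_one) htail
  exact Antitone.intervalIntegrable fun s t hst => measureReal_mono fun ω h => hst.trans h

theorem measureReal_le_integral_of_iUnion_eq_univ {α ι : Type*} [MeasurableSpace α]
    {μ : Measure α} [IsFiniteMeasure μ] [Countable ι] {s : ι → Set α}
    (hs : ∀ i, MeasurableSet (s i)) (hd : Pairwise (Disjoint on s)) (hU : ⋃ i, s i = univ)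
    {t : Set α} (ht : MeasurableSet t) {f : α → ℝ} (hf : Integrable f μ)
    (h : ∀ i, μ.real (s i ∩ t) ≤ ∫ a in s i, f a ∂μ) :
    μ.real t ≤ ∫ a, f a ∂μ := by
  have hmeas : HasSum (fun i => μ.real (s i ∩ t)) (μ.real t) := by
    simpa [setIntegral_const, ← iUnion_inter, hU] using
      hasSum_integral_iUnion (f := fun _ => (1 : ℝ)) (μ := μ) (fun i => (hs i).inter ht)
        (hd.mono fun i j h => h.mono inter_subset_left inter_subset_left)
        (integrableOn_const (measure_ne_top _ _))
  have hint : HasSum (fun i => ∫ a in s i, f a ∂μ) (∫ a, f a ∂μ) := by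
    simpa [hU] using hasSum_integral_iUnion hs hd hf.integrableOn
  exact hasSum_le h hmeas hint

section ProductTail

variable {Ω : Type*} [MeasurableSpace Ω] {P : Measure Ω} [IsFiniteMeasure P] {A B : Ω → ℝ}
  {β x : ℝ}

theorem integrable_min_one_mul_div (hA : Measurable A) (hA0 : ∀ ω, 0 ≤ A ω) (hβ : 0 ≤ β)
    (hx : 0 ≤ x) : Integrable (fun ω => min 1 (β * A ω / x)) P := by
  refine .of_bound (by fun_prop) 1 (.of_forall fun ω => ?_)
  have := hA0 ω
  rw [norm_of_nonneg (by positivity)]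
  exact min_le_left _ _

theorem measureReal_le_min_one_mul_div_le {α : ℝ} (hβ : 0 < β) (hx : 0 < x)
    (hA : ∀ y > 0, P.real {ω | y ≤ A ω} ≤ α / y) {t : ℝ} (ht : 0 < t) :
    P.real {ω | t ≤ min 1 (β * A ω / x)} ≤ α * β / x / t :=
  calc P.real {ω | t ≤ min 1 (β * A ω / x)} ≤ P.real {ω | t * x / β ≤ A ω} :=
        measureReal_mono fun ω (hω : t ≤ min 1 (β * A ω / x)) => by
          have := (le_div_iff₀ hx).1 (le_min_iff.1 hω).2
          exact (div_le_iff₀ hβ).2 (by linarith)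
    _ ≤ α / (t * x / β) := hA _ (by positivity)
    _ = α * β / x / t := by field_simp

theorem measureReal_inter_le_integral_min {s : Set Ω} (hs : MeasurableSet s)
    (hint : IntegrableOn (fun ω => min 1 (β * A ω / x)) s P)
    {a r : ℝ} (ha : 0 < a) (hr : 1 ≤ r) (hx : 0 < x) (hβ : 0 ≤ β)
    (hAs : ∀ ω ∈ s, a ≤ A ω ∧ A ω < a * r)
    (hBs : ∀ y > 0, P.real (s ∩ {ω | y ≤ B ω}) ≤ β / y * P.real s) :
    P.real (s ∩ {ω | x ≤ A ω * B ω}) ≤ r * ∫ ω in s, min 1 (β * A ω / x) ∂P := by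
  have hsub : s ∩ {ω | x ≤ A ω * B ω} ⊆ s ∩ {ω | x / (a * r) ≤ B ω} := by
    rintro ω ⟨hωs, hω : x ≤ A ω * B ω⟩
    obtain ⟨h1, h2⟩ := hAs ω hωs
    refine ⟨hωs, (div_le_iff₀ (mul_pos ha (by linarith))).2 ?_⟩
    rcases le_or_gt 0 (B ω) with hB | hB <;> nlinarith
  have hconst : min 1 (β * a / x) * P.real s ≤ ∫ ω in s, min 1 (β * A ω / x) ∂P :=
    setIntegral_ge_of_const_le_real hs (measure_ne_top _ _)
      (fun ω hω => by gcongr; exact (hAs ω hω).1) hint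
  calc P.real (s ∩ {ω | x ≤ A ω * B ω})
      ≤ min (P.real s) (β / (x / (a * r)) * P.real s) :=
        le_min (measureReal_mono (hsub.trans inter_subset_left))
          ((measureReal_mono hsub).trans (hBs _ (by positivity)))
    _ = min 1 (r * (β * a / x)) * P.real s := by
        rw [min_mul_of_nonneg _ _ measureReal_nonneg, one_mul]
        congr 2
        field_simp
    _ ≤ r * min 1 (β * a / x) * P.real s := by
        rw [mul_min_of_nonneg _ _ (by linarith), mul_one]
        gcongr
    _ ≤ r * ∫ ω in s, min 1 (β * A ω / x) ∂P := by
        rw [mul_assoc]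
        gcongr

theorem measureReal_le_integral_min_mul (hA : Measurable A) (hB : Measurable B)
    (hA0 : ∀ ω, 0 < A ω) (hβ : 0 ≤ β) (hx : 0 < x)
    (hBA : ∀ y > 0, ∀ s, MeasurableSet[MeasurableSpace.comap A inferInstance] s →
      P.real (s ∩ {ω | y ≤ B ω}) ≤ β / y * P.real s)
    {r : ℝ} (hr : 1 < r) :
    P.real {ω | x ≤ A ω * B ω} ≤ (∫ ω, min 1 (β * A ω / x) ∂P) * r := by
  have hint := integrable_min_one_mul_div (P := P) hA (fun ω => (hA0 ω).le) hβ hx.le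
  rw [mul_comm, ← integral_const_mul]
  refine measureReal_le_integral_of_iUnion_eq_univ
    (s := fun k : ℤ => A ⁻¹' Ico (r ^ k) (r ^ (k + 1))) (fun k => hA measurableSet_Ico) ?_ ?_
    (measurableSet_le measurable_const (hA.mul hB)) (hint.const_mul r) fun k => ?_
  · simpa only [Order.succ_eq_add_one] using
      (zpow_right_mono₀ hr.le).pairwise_disjoint_on_Ico_succ.mono fun k l h => h.preimage A
  · exact eq_univ_of_forall fun ω => mem_iUnion.2 (exists_mem_Ico_zpow (hA0 ω) hr)
  · rw [integral_const_mul]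
    refine measureReal_inter_le_integral_min (hA measurableSet_Ico) hint.integrableOn
      (zpow_pos (by linarith) k) hr.le hx hβ (fun ω hω => ⟨hω.1, ?_⟩)
      fun y hy => hBA y hy _ ⟨_, measurableSet_Ico, rfl⟩
    simpa only [zpow_add_one₀ (by linarith : r ≠ 0)] using hω.2

theorem measureReal_le_integral_min (hA : Measurable A) (hB : Measurable B)
    (hA0 : ∀ ω, 0 < A ω) (hβ : 0 ≤ β) (hx : 0 < x)
    (hBA : ∀ y > 0, ∀ s, MeasurableSet[MeasurableSpace.comap A inferInstance] s →
      P.real (s ∩ {ω | y ≤ B ω}) ≤ β / y * P.real s) :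
    P.real {ω | x ≤ A ω * B ω} ≤ ∫ ω, min 1 (β * A ω / x) ∂P := by
  have hlim : Tendsto (fun r => (∫ ω, min 1 (β * A ω / x) ∂P) * r) (𝓝[>] 1)
      (𝓝 (∫ ω, min 1 (β * A ω / x) ∂P)) := by
    simpa using ((continuous_const_mul _).tendsto (1 : ℝ)).mono_left nhdsWithin_le_nhds
  exact ge_of_tendsto hlim (eventually_nhdsWithin_of_forall fun r hr =>
    measureReal_le_integral_min_mul hA hB hA0 hβ hx hBA hr)

end ProductTail

theorem linear_linear_combination_general {Ω : Type*} [MeasurableSpace Ω] (P : Measure Ω)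
    [IsProbabilityMeasure P] (A B : Ω → ℝ) (hmA : Measurable A) (hmB : Measurable B)
    (hApos : ∀ ω, 0 < A ω)
    (α β : ℝ) (hα : 0 < α) (hβ : 0 < β)
    (hA : ∀ x > 0, (P {ω | x ≤ A ω}).toReal ≤ α / x)
    (hB : ∀ x > 0, ∀ s, MeasurableSet[MeasurableSpace.comap A inferInstance] s →
      (P (s ∩ {ω | x ≤ B ω})).toReal ≤ (β / x) * (P s).toReal)
    (x : ℝ) (hx : 0 < x) :
    (P {ω | x ≤ A ω * B ω}).toReal ≤
      (α * β / x) * (1 + max 0 (Real.log (x / (α * β)))) := by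
  calc (P {ω | x ≤ A ω * B ω}).toReal ≤ ∫ ω, min 1 (β * A ω / x) ∂P :=
        measureReal_le_integral_min hmA hmB hApos hβ.le hx hB
    _ ≤ α * β / x * (1 + max 0 (log (1 / (α * β / x)))) :=
        integral_le_of_measureReal_le_div (by fun_prop)
          (.of_forall fun ω => le_min zero_le_one (by have := hApos ω; positivity))
          (.of_forall fun ω => min_le_left _ _) (by positivity)
          fun t ht => measureReal_le_min_one_mul_div_le hβ hx hA ht
    _ = α * β / x * (1 + max 0 (log (x / (α * β)))) := by rw [one_div_div]

theorem linear_linear_combination {Ω : Type*} [MeasurableSpace Ω] (P : Measure Ω)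
    [IsProbabilityMeasure P] (A B : Ω → ℝ) (hmA : Measurable A) (hmB : Measurable B)
    (hApos : ∀ ω, 0 < A ω) (hBpos : ∀ ω, 0 < B ω)
    (α β : ℝ) (hα : 0 < α) (hβ : 0 < β)
    (hA : ∀ x > 0, (P {ω | x ≤ A ω}).toReal ≤ α / x)
    (hB : ∀ x > 0, ∀ s, MeasurableSet[MeasurableSpace.comap A inferInstance] s →
      (P (s ∩ {ω | x ≤ B ω})).toReal ≤ (β / x) * (P s).toReal)
    (x : ℝ) (hx : 0 < x) :
    (P {ω | x ≤ A ω * B ω}).toReal ≤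
      (α * β / x) * (1 + max 0 (Real.log (x / (α * β)))) :=
  linear_linear_combination_general P A B hmA hmB hApos α β hα hβ hA hB x hx
end

section
/- Let A, B, C be positive random variables such that P[A ≥ x] ≤ α/x for some α > 0 and all x > 0, and such that for every value of A, P[B ≥ x | A] ≤ P[C ≥ x] for all x. Then P[AB ≥ x] ≤ (α/x)·E[C]. -/
open MeasureTheory ProbabilityTheory Real
open Set Filter Topology
open scoped Function

/-!
Split `Ω` into the shells `A ∈ [r ^ k, r ^ (k + 1))`, `k ∈ ℤ`, which lie in `σ(A)`. On the `k`-th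
shell `AB ≥ x` forces `B ≥ x / r ^ (k + 1)`, so the hypothesis on `B` bounds `P[AB ≥ x]` by
`∑ₖ P[C ≥ x / r ^ (k + 1)] P[shell k]`. Exchanging sum and expectation, for a fixed value `c` of
`C` the shells that contribute all lie in `{A ≥ x / (r c)}`, whose probability is at most
`α r c / x`. Hence `P[AB ≥ x] ≤ (α r / x) E[C]` for every `r > 1`; let `r ↓ 1`.
-/

lemma pairwise_disjoint_Ico_zpow_of_one_le {r : ℝ} (hr : 1 ≤ r) :
    Pairwise (Disjoint on fun k : ℤ => Ico (r ^ k) (r ^ (k + 1))) := by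
  simpa only [Order.succ_eq_add_one] using (zpow_right_mono₀ hr).pairwise_disjoint_on_Ico_succ

section Shells

variable {Ω : Type*} [MeasurableSpace Ω] {μ : Measure Ω} {A : Ω → ℝ} {r : ℝ}

lemma tsum_indicator_measure_zpow_shell_le (hmA : Measurable A) (hr : 1 < r)
    (x : ℝ) {c : ℝ} (hc : 0 < c) :
    ∑' k : ℤ, {k : ℤ | x / r ^ (k + 1) ≤ c}.indicator
        (fun k => μ (A ⁻¹' Ico (r ^ k) (r ^ (k + 1)))) k ≤ μ {ω | x / (r * c) ≤ A ω} := by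
  set S := {k : ℤ | x / r ^ (k + 1) ≤ c}
  rw [← tsum_subtype, ← measure_biUnion S.to_countable
    (fun i _ j _ hij => pairwise_disjoint_Ico_zpow_of_one_le hr.le hij |>.preimage A)
    fun k _ => hmA measurableSet_Ico]
  refine measure_mono (iUnion₂_subset fun k hk ω hω => ?_)
  have hr0 : 0 < r := by linarith
  calc x / (r * c) ≤ r ^ k := by
        rw [div_le_iff₀ (by positivity)]
        calc x ≤ c * r ^ (k + 1) := (div_le_iff₀ (zpow_pos hr0 _)).1 hk
          _ = r ^ k * (r * c) := by rw [zpow_add_one₀ hr0.ne']; ring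
    _ ≤ A ω := hω.1

lemma measure_le_tsum_measure_mul_measure_zpow_shell [IsFiniteMeasure μ] {B C : Ω → ℝ}
    (hApos : ∀ ω, 0 < A ω)
    (hB : ∀ x : ℝ, ∀ s, MeasurableSet[MeasurableSpace.comap A inferInstance] s →
      (μ (s ∩ {ω | x ≤ B ω})).toReal ≤ (μ {ω | x ≤ C ω}).toReal * (μ s).toReal)
    {x : ℝ} (hx : 0 ≤ x) (hr : 1 < r) :
    μ {ω | x ≤ A ω * B ω} ≤ ∑' k : ℤ,
      μ {ω | x / r ^ (k + 1) ≤ C ω} * μ (A ⁻¹' Ico (r ^ k) (r ^ (k + 1))) := by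
  set s : ℤ → Set Ω := fun k => A ⁻¹' Ico (r ^ k) (r ^ (k + 1))
  have hcover : (⋃ k, s k) = univ :=
    eq_univ_of_forall fun ω => mem_iUnion.2 (exists_mem_Ico_zpow (hApos ω) hr)
  calc μ {ω | x ≤ A ω * B ω} = μ (⋃ k, s k ∩ {ω | x ≤ A ω * B ω}) := by
        rw [← iUnion_inter, hcover, univ_inter]
    _ ≤ ∑' k, μ (s k ∩ {ω | x ≤ A ω * B ω}) := measure_iUnion_le _
    _ ≤ ∑' k, μ (s k ∩ {ω | x / r ^ (k + 1) ≤ B ω}) := by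
        refine ENNReal.tsum_le_tsum fun k => measure_mono fun ω ⟨hωs, hωx⟩ => ⟨hωs, ?_⟩
        calc x / r ^ (k + 1) ≤ x / A ω := div_le_div_of_nonneg_left hx (hApos ω) hωs.2.le
          _ ≤ B ω := (div_le_iff₀ (hApos ω)).2 (by rw [mul_comm]; exact hωx)
    _ ≤ ∑' k, μ {ω | x / r ^ (k + 1) ≤ C ω} * μ (s k) := by
        refine ENNReal.tsum_le_tsum fun k => ?_
        have h := hB (x / r ^ (k + 1)) (s k) ⟨_, measurableSet_Ico, rfl⟩
        rw [← ENNReal.toReal_mul] at h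
        exact (ENNReal.toReal_le_toReal (measure_ne_top _ _) (by finiteness)).1 h

lemma tsum_measure_mul_measure_eq_lintegral_tsum_indicator {ι : Type*} [Countable ι]
    {t : ι → Set Ω} (ht : ∀ i, MeasurableSet (t i)) (s : ι → Set Ω) :
    ∑' i, μ (t i) * μ (s i) = ∫⁻ ω, ∑' i, (t i).indicator (fun _ => μ (s i)) ω ∂μ := by
  rw [lintegral_tsum fun i => (measurable_const.indicator (ht i)).aemeasurable]
  exact tsum_congr fun i => by rw [lintegral_indicator_const (ht i), mul_comm]

lemma measure_le_mul_le_ofReal_mul_integral [IsFiniteMeasure μ] {B C : Ω → ℝ}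
    (hmA : Measurable A) (hmC : Measurable C) (hApos : ∀ ω, 0 < A ω) (hCpos : ∀ ω, 0 < C ω)
    (hCint : Integrable C μ) {α : ℝ} (hα : 0 < α)
    (hA : ∀ x > 0, (μ {ω | x ≤ A ω}).toReal ≤ α / x)
    (hB : ∀ x : ℝ, ∀ s, MeasurableSet[MeasurableSpace.comap A inferInstance] s →
      (μ (s ∩ {ω | x ≤ B ω})).toReal ≤ (μ {ω | x ≤ C ω}).toReal * (μ s).toReal)
    {x : ℝ} (hx : 0 < x) (hr : 1 < r) :
    μ {ω | x ≤ A ω * B ω} ≤ ENNReal.ofReal (α * r / x * ∫ ω, C ω ∂μ) := by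
  have hr0 : 0 < r := by linarith
  have htail : ∀ ω, ∑' k : ℤ, {ω' | x / r ^ (k + 1) ≤ C ω'}.indicator
      (fun _ => μ (A ⁻¹' Ico (r ^ k) (r ^ (k + 1)))) ω ≤ ENNReal.ofReal (α * r / x * C ω) :=
    fun ω => calc
      _ ≤ μ {ω' | x / (r * C ω) ≤ A ω'} :=
        tsum_indicator_measure_zpow_shell_le hmA hr x (hCpos ω)
      _ ≤ ENNReal.ofReal (α / (x / (r * C ω))) := by
        have := hCpos ω
        rw [ENNReal.le_ofReal_iff_toReal_le (measure_ne_top _ _) (by positivity)]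
        exact hA _ (by positivity)
      _ = ENNReal.ofReal (α * r / x * C ω) := by
        congr 1
        field_simp
  calc μ {ω | x ≤ A ω * B ω}
      ≤ ∑' k : ℤ, μ {ω | x / r ^ (k + 1) ≤ C ω} * μ (A ⁻¹' Ico (r ^ k) (r ^ (k + 1))) :=
        measure_le_tsum_measure_mul_measure_zpow_shell hApos hB hx.le hr
    _ = ∫⁻ ω, ∑' k : ℤ, {ω' | x / r ^ (k + 1) ≤ C ω'}.indicator
          (fun _ => μ (A ⁻¹' Ico (r ^ k) (r ^ (k + 1)))) ω ∂μ :=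
        tsum_measure_mul_measure_eq_lintegral_tsum_indicator
          (fun _ => measurableSet_le measurable_const hmC) _
    _ ≤ ∫⁻ ω, ENNReal.ofReal (α * r / x * C ω) ∂μ := lintegral_mono htail
    _ = ENNReal.ofReal (α * r / x * ∫ ω, C ω ∂μ) := by
        rw [← integral_const_mul, ofReal_integral_eq_lintegral_ofReal (hCint.const_mul _)
          (.of_forall fun ω => by have := hCpos ω; positivity)]

end Shells

theorem linear_bounded_expectation_general {Ω : Type*} [MeasurableSpace Ω] (P : Measure Ω)
    [IsProbabilityMeasure P] (A B C : Ω → ℝ) (hmA : Measurable A)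
    (hmC : Measurable C) (hApos : ∀ ω, 0 < A ω)
    (hCpos : ∀ ω, 0 < C ω) (hCint : Integrable C P)
    (α : ℝ) (hα : 0 < α)
    (hA : ∀ x > 0, (P {ω | x ≤ A ω}).toReal ≤ α / x)
    (hB : ∀ x : ℝ, ∀ s, MeasurableSet[MeasurableSpace.comap A inferInstance] s →
      (P (s ∩ {ω | x ≤ B ω})).toReal ≤ (P {ω | x ≤ C ω}).toReal * (P s).toReal)
    (x : ℝ) (hx : 0 < x) :
    (P {ω | x ≤ A ω * B ω}).toReal ≤ (α / x) * ∫ ω, C ω ∂P := by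
  have hCint_nonneg : 0 ≤ ∫ ω, C ω ∂P := integral_nonneg fun ω => (hCpos ω).le
  have hbound : ∀ r > 1, (P {ω | x ≤ A ω * B ω}).toReal ≤ α * r / x * ∫ ω, C ω ∂P := by
    intro r hr
    have hr0 : 0 < r := by linarith
    exact ENNReal.toReal_le_of_le_ofReal (by positivity)
      (measure_le_mul_le_ofReal_mul_integral hmA hmC hApos hCpos hCint hα hA hB hx hr)
  have hlim : Tendsto (fun r => α * r / x * ∫ ω, C ω ∂P) (𝓝[>] 1) (𝓝 (α / x * ∫ ω, C ω ∂P)) :=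
    ((by fun_prop : Continuous fun r => α * r / x * ∫ ω, C ω ∂P).tendsto' 1 _
      (by rw [mul_one])).mono_left nhdsWithin_le_nhds
  exact ge_of_tendsto hlim (eventually_nhdsWithin_of_forall hbound)

theorem linear_bounded_expectation {Ω : Type*} [MeasurableSpace Ω] (P : Measure Ω)
    [IsProbabilityMeasure P] (A B C : Ω → ℝ) (hmA : Measurable A) (hmB : Measurable B)
    (hmC : Measurable C) (hApos : ∀ ω, 0 < A ω) (hBpos : ∀ ω, 0 < B ω)
    (hCpos : ∀ ω, 0 < C ω) (hCint : Integrable C P)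
    (α : ℝ) (hα : 0 < α)
    (hA : ∀ x > 0, (P {ω | x ≤ A ω}).toReal ≤ α / x)
    (hB : ∀ x : ℝ, ∀ s, MeasurableSet[MeasurableSpace.comap A inferInstance] s →
      (P (s ∩ {ω | x ≤ B ω})).toReal ≤ (P {ω | x ≤ C ω}).toReal * (P s).toReal)
    (x : ℝ) (hx : 0 < x) :
    (P {ω | x ≤ A ω * B ω}).toReal ≤ (α / x) * ∫ ω, C ω ∂P :=
  linear_bounded_expectation_general P A B C hmA hmC hApos hCpos hCint α hα hA hB x hx
end

section
/- Let Ā be an arbitrary n×n symmetric real matrix, and let G be a Gaussian random variable of mean 0 and variance σ²/n. Let A = Ā + G·I. Then P[‖A⁻¹‖₂ ≥ x] ≤ √(2/π) · n^{3/2}/(xσ). -/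
/-! If `‖(Ā + G • 1)⁻¹‖ ≥ x`, the Hermitian matrix `Ā + G • 1` has an eigenvalue `λᵢ + G` of
modulus at most `1 / x`, i.e. `G` lies in one of the `n` intervals `[-λᵢ - 1/x, -λᵢ + 1/x]`.
The Gaussian density is bounded by `1 / √(2πv)`, so each interval has probability at most
`(2/x) / √(2πσ²/n)`, and a union bound over the `n` intervals gives the claim. -/

open MeasureTheory ProbabilityTheory Real

namespace Matrix.IsHermitian

open scoped Matrix.Norms.L2Operator

variable {𝕜 n : Type*} [RCLike 𝕜] [Fintype n] [DecidableEq n] {A : Matrix n n 𝕜}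

lemma l2_opNorm_cfc_lt (hA : A.IsHermitian) {f : ℝ → ℝ} {c : ℝ} (hc : 0 < c)
    (h : ∀ i, |f (hA.eigenvalues i)| < c) : ‖cfc f A‖ < c := by
  have hU := hA.eigenvectorUnitary.prop
  rw [hA.cfc_eq, IsHermitian.cfc, Unitary.conjStarAlgAut_apply, CStarRing.norm_mul_mem_unitary _
    (Unitary.star_mem hU), CStarRing.norm_mem_unitary_mul _ hU, l2_opNorm_diagonal,
    pi_norm_lt_iff hc]
  simpa using h

lemma spectrum_add_smul_one (hA : A.IsHermitian) (g : ℝ) :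
    spectrum ℝ (A + g • (1 : Matrix n n 𝕜)) = Set.range fun i => hA.eigenvalues i + g := by
  rw [← Algebra.algebraMap_eq_smul_one, ← spectrum.add_singleton_eq,
    hA.spectrum_real_eq_range_eigenvalues, Set.add_singleton, ← Set.range_comp]
  rfl

lemma exists_abs_eigenvalues_add_le_of_le_norm_inv (hA : A.IsHermitian) {g x : ℝ} (hx : 0 < x)
    (h : x ≤ ‖toEuclideanCLM (𝕜 := 𝕜) (A + g • (1 : Matrix n n 𝕜))⁻¹‖) :
    ∃ i, |hA.eigenvalues i + g| ≤ x⁻¹ := by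
  by_contra! hlt
  have hB : (A + g • (1 : Matrix n n 𝕜)).IsHermitian :=
    hA.add (isHermitian_one.smul (IsSelfAdjoint.all g))
  have hspec : ∀ μ ∈ spectrum ℝ (A + g • (1 : Matrix n n 𝕜)), x⁻¹ < |μ| := by
    rw [hA.spectrum_add_smul_one]
    rintro - ⟨i, rfl⟩
    exact hlt i
  have hunit : IsUnit (A + g • (1 : Matrix n n 𝕜)) :=
    spectrum.isUnit_of_zero_notMem ℝ fun h0 => by simpa using (inv_pos.2 hx).trans (hspec 0 h0)
  refine h.not_gt ?_
  have hinv : (A + g • (1 : Matrix n n 𝕜))⁻¹ =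
      cfc (fun t : ℝ => t⁻¹) (A + g • (1 : Matrix n n 𝕜)) :=
    (nonsing_inv_eq_ringInverse _).trans (cfc_ringInverse_id (R := ℝ) _ hunit).symm
  rw [← cstar_norm_def, hinv]
  refine hB.l2_opNorm_cfc_lt hx fun i => ?_
  rw [abs_inv]
  exact inv_lt_of_inv_lt₀ hx (hspec _ (hB.eigenvalues_mem_spectrum_real i))

end Matrix.IsHermitian

lemma gaussianPDFReal_le_inv_sqrt (μ : ℝ) (v : NNReal) (y : ℝ) :
    gaussianPDFReal μ v y ≤ (√(2 * π * v))⁻¹ := by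
  rw [gaussianPDFReal_def]
  refine mul_le_of_le_one_right (by positivity) (exp_le_one_iff.2 ?_)
  exact div_nonpos_of_nonpos_of_nonneg (neg_nonpos.2 (sq_nonneg _)) (by positivity)

lemma gaussianReal_le_ofReal_mul_volume (μ : ℝ) {v : NNReal} (hv : v ≠ 0) (s : Set ℝ) :
    gaussianReal μ v s ≤ ENNReal.ofReal (√(2 * π * v))⁻¹ * volume s := by
  rw [gaussianReal_apply μ hv, ← setLIntegral_const]
  exact lintegral_mono fun y => ENNReal.ofReal_le_ofReal (gaussianPDFReal_le_inv_sqrt μ v y)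

lemma gaussianReal_closedBall_le (μ : ℝ) {v : NNReal} (hv : v ≠ 0) (a r : ℝ) :
    gaussianReal μ v (Metric.closedBall a r) ≤ ENNReal.ofReal (2 * r / √(2 * π * v)) := by
  refine (gaussianReal_le_ofReal_mul_volume μ hv _).trans_eq ?_
  rw [Real.volume_closedBall, ← ENNReal.ofReal_mul (by positivity), inv_mul_eq_div]

lemma natCast_mul_div_sqrt_two_pi_eq (n : ℕ) {σ : ℝ} (hσ : 0 < σ) (x : ℝ) :
    n * (2 * x⁻¹ / √(2 * π * (σ ^ 2 / n))) = √(2 / π) * (n : ℝ) ^ ((3 : ℝ) / 2) / (x * σ) := by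
  rcases Nat.eq_zero_or_pos n with rfl | hn
  · simp
  have hn' : (0 : ℝ) < n := Nat.cast_pos.2 hn
  have h32 : (n : ℝ) ^ ((3 : ℝ) / 2) = n * √n := by
    rw [show (3 : ℝ) / 2 = 1 + 1 / 2 by norm_num, rpow_add hn', rpow_one, ← sqrt_eq_rpow]
  have hsqrt : √(2 * π * (σ ^ 2 / n)) = √(2 / π) * π * σ / √n := by
    rw [sqrt_eq_iff_eq_sq (by positivity) (by positivity), div_pow, mul_pow, mul_pow,
      sq_sqrt (by positivity), sq_sqrt hn'.le]
    field_simp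
  rw [h32, hsqrt]
  field_simp
  rw [sq_sqrt (by positivity)]
  field_simp

theorem symmetric_diagonal_perturbation_inverse_norm {Ω : Type*} [MeasurableSpace Ω]
    (P : Measure Ω) [IsProbabilityMeasure P] (n : ℕ) (σ : ℝ) (hσ : 0 < σ)
    (Abar : Matrix (Fin n) (Fin n) ℝ) (hsym : Abar.IsSymm)
    (G : Ω → ℝ) (hG : Measure.map G P = gaussianReal 0 (Real.toNNReal (σ ^ 2 / n)))
    (x : ℝ) (hx : 0 < x) :
    (P {ω | x ≤
        ‖Matrix.toEuclideanCLM (𝕜 := ℝ)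
          ((Abar + G ω • (1 : Matrix (Fin n) (Fin n) ℝ))⁻¹)‖}).toReal ≤
      Real.sqrt (2 / π) * (n : ℝ) ^ ((3 : ℝ) / 2) / (x * σ) := by
  have hA : Abar.IsHermitian := Matrix.isHermitian_iff_isSymm.2 hsym
  have hGm : AEMeasurable G P := .of_map_ne_zero (hG ▸ IsProbabilityMeasure.ne_zero _)
  set c := 2 * x⁻¹ / √(2 * π * (σ ^ 2 / n))
  have hball : ∀ i, P (G ⁻¹' Metric.closedBall (-hA.eigenvalues i) x⁻¹) ≤ ENNReal.ofReal c := by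
    intro i
    have hvar : (0 : ℝ) < σ ^ 2 / n := div_pos (pow_pos hσ 2) (Nat.cast_pos.2 i.pos)
    rw [← Measure.map_apply_of_aemeasurable hGm measurableSet_closedBall, hG]
    simpa [c, hvar.le] using gaussianReal_closedBall_le 0 (toNNReal_pos.2 hvar).ne' _ x⁻¹
  calc (P _).toReal ≤ (P (⋃ i, G ⁻¹' Metric.closedBall (-hA.eigenvalues i) x⁻¹)).toReal :=
        ENNReal.toReal_mono (measure_ne_top _ _) <| measure_mono fun ω hω => by
          obtain ⟨i, hi⟩ := hA.exists_abs_eigenvalues_add_le_of_le_norm_inv hx hω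
          refine Set.mem_iUnion.2 ⟨i, ?_⟩
          rwa [Set.mem_preimage, Metric.mem_closedBall, dist_eq, sub_neg_eq_add, add_comm]
    _ ≤ (∑ _i : Fin n, ENNReal.ofReal c).toReal :=
        ENNReal.toReal_mono (ENNReal.sum_ne_top.2 fun _ _ => ENNReal.ofReal_ne_top) <|
          (measure_iUnion_fintype_le P _).trans (Finset.sum_le_sum fun i _ => hball i)
    _ = n * c := by
      rw [ENNReal.toReal_sum fun _ _ => ENNReal.ofReal_ne_top]
      simp [ENNReal.toReal_ofReal (by positivity : 0 ≤ c)]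
    _ = _ := natCast_mul_div_sqrt_two_pi_eq n hσ x
end
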